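/- If E is a Hausdorff zero-dimensional space with a topologically distinguished point, then the point at infinity of the one-point compactification of a countably infinite disjoint union of copies of E is topologically distinguished, i.e. it is similar only to itself. -/

import Mathlib

open OnePoint Topology

/-- Two points of (possibly different) topological spaces are *similar* if there is a
homeomorphism of pointed open neighbourhoods taking one to the other. -/
def PointedSimilar {E F : Type*} [TopologicalSpace E] [TopologicalSpace F]
    (x : E) (y : F) : Prop :=
  ∃ (U : Set E) (V : Set F) (_ : IsOpen U) (_ : IsOpen V) (hx : x ∈ U) (hy : y ∈ V)
    (φ : U ≃ₜ V), φ ⟨x, hx⟩ = ⟨y, hy⟩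

theorem psim_of_ph {E F : Type*} [TopologicalSpace E] [TopologicalSpace F]
    (e : OpenPartialHomeomorph E F) {x : E} (hx : x ∈ e.source) : PointedSimilar x (e x) := by
  refine ⟨e.source, e.target, e.open_source, e.open_target, hx, e.map_source hx,
    e.toHomeomorphSourceTarget, ?_⟩
  ext
  simp

theorem psim_ph {E F : Type*} [TopologicalSpace E] [TopologicalSpace F] {x : E} {y : F}
    (h : PointedSimilar x y) : ∃ e : OpenPartialHomeomorph E F, x ∈ e.source ∧ e x = y := by
  obtain ⟨U, V, hU, hV, hx, hy, φ, hφ⟩ := h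
  have : Nonempty U := ⟨⟨x, hx⟩⟩
  have : Nonempty V := ⟨⟨y, hy⟩⟩
  set A := hU.isOpenEmbedding_subtypeVal.toOpenPartialHomeomorph (Subtype.val)
  set C := hV.isOpenEmbedding_subtypeVal.toOpenPartialHomeomorph (Subtype.val)
  refine ⟨A.symm.trans (φ.toOpenPartialHomeomorph.trans C), ?_, ?_⟩
  · simp [A, C, OpenPartialHomeomorph.trans_source]
    exact hx
  · have hA : A.symm x = ⟨x, hx⟩ := by
      simpa [A] using hU.isOpenEmbedding_subtypeVal.toOpenPartialHomeomorph_left_inv (Subtype.val) (x := ⟨x,hx⟩)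
    simp [OpenPartialHomeomorph.trans_apply, hA, hφ, C]

theorem psim_symm {E F : Type*} [TopologicalSpace E] [TopologicalSpace F] {x : E} {y : F}
    (h : PointedSimilar x y) : PointedSimilar y x := by
  obtain ⟨e, hx, rfl⟩ := psim_ph h
  have := psim_of_ph e.symm (e.map_source hx)
  rwa [e.left_inv hx] at this

theorem psim_trans {E F G : Type*} [TopologicalSpace E] [TopologicalSpace F] [TopologicalSpace G]
    {x : E} {y : F} {z : G} (hxy : PointedSimilar x y) (hyz : PointedSimilar y z) :
    PointedSimilar x z := by
  obtain ⟨e, hx, rfl⟩ := psim_ph hxy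
  obtain ⟨f, hy, rfl⟩ := psim_ph hyz
  have hx' : x ∈ (e.trans f).source := ⟨hx, hy⟩
  simpa using psim_of_ph (e.trans f) hx'

theorem psim_of_isOpenEmbedding {E F : Type*} [TopologicalSpace E] [TopologicalSpace F]
    {f : E → F} (hf : Topology.IsOpenEmbedding f) (a : E) : PointedSimilar a (f a) := by
  have : Nonempty E := ⟨a⟩
  simpa using psim_of_ph (hf.toOpenPartialHomeomorph f) (Set.mem_univ a)

theorem psim_prodMk {E : Type*} [TopologicalSpace E] (n : ℕ) (a : E) :
    PointedSimilar a ((n, a) : ℕ × E) := by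
  refine psim_of_isOpenEmbedding ⟨isEmbedding_prodMkRight n, ?_⟩ a
  have hr : Set.range (Prod.mk n : E → ℕ × E) = Prod.fst ⁻¹' {n} := by
    ext q
    simp [Prod.ext_iff, eq_comm]
  rw [hr]
  exact (isOpen_discrete {n}).preimage continuous_fst

theorem aux_infty_distinguished {E : Type*} [TopologicalSpace E] [T2Space E]
    (x : E) (hx : ∀ y : E, PointedSimilar x y → y = x) :
    ∀ y : OnePoint (ℕ × E), PointedSimilar (∞ : OnePoint (ℕ × E)) y → y = ∞ := by
  intro y h
  cases y with
  | infty => rfl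
  | coe p =>
  exfalso
  obtain ⟨e, hesrc, he⟩ := psim_ph h
  -- the open set around ∞ where e avoids ∞
  set s : Set (OnePoint (ℕ × E)) := e.source ∩ e ⁻¹' {∞}ᶜ with hs_def
  have hso : IsOpen s := e.isOpen_inter_preimage isOpen_compl_singleton
  have hsinf : (∞ : OnePoint (ℕ × E)) ∈ s := by
    refine ⟨hesrc, ?_⟩
    simp only [Set.mem_preimage, Set.mem_compl_iff, Set.mem_singleton_iff, he]
    exact fun hc => nomatch hc
  -- the sequence n ↦ (n, x) tends to ∞
  have htend : Filter.Tendsto (fun n : ℕ => ((n, x) : OnePoint (ℕ × E))) Filter.atTop (𝓝 ∞) := by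
    rw [tendsto_nhds]
    intro U hU hUinf
    have hK : IsCompact ((↑) ⁻¹' U : Set (ℕ × E))ᶜ := ((isOpen_iff_of_mem hUinf).mp hU).2
    have hfin : (Prod.fst '' ((↑) ⁻¹' U : Set (ℕ × E))ᶜ).Finite :=
      (hK.image continuous_fst).finite_of_discrete
    obtain ⟨N, hN⟩ := hfin.bddAbove
    filter_upwards [Filter.eventually_gt_atTop N] with n hn
    by_contra hc
    exact absurd (hN ⟨(n, x), hc, rfl⟩) (not_le.mpr hn)
  have hsrc : ∀ᶠ n : ℕ in Filter.atTop, ((n, x) : OnePoint (ℕ × E)) ∈ s :=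
    htend.eventually_mem (hso.mem_nhds hsinf)
  -- e ∘ seq tends to p
  have htend2 : Filter.Tendsto (fun n : ℕ => e ((n, x) : OnePoint (ℕ × E))) Filter.atTop
      (𝓝 (↑p)) := by
    rw [← he]
    exact (e.continuousAt hesrc).tendsto.comp htend
  -- eventually e (n,x) is in the copy of index p.1
  have hW : IsOpen ((↑) '' (Prod.fst ⁻¹' {p.1} : Set (ℕ × E)) : Set (OnePoint (ℕ × E))) :=
    isOpenEmbedding_coe.isOpenMap _ ((isOpen_discrete {p.1}).preimage continuous_fst)
  have hpW : (↑p : OnePoint (ℕ × E)) ∈ (↑) '' (Prod.fst ⁻¹' {p.1} : Set (ℕ × E)) :=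
    ⟨p, rfl, rfl⟩
  have hcopy := htend2.eventually_mem (hW.mem_nhds hpW)
  -- for n with (n,x) ∈ s and image in the copy, the image equals ↑(p.1, x)
  have key : ∀ n : ℕ, ((n, x) : OnePoint (ℕ × E)) ∈ s →
      e ((n, x) : OnePoint (ℕ × E)) ∈ (↑) '' (Prod.fst ⁻¹' {p.1} : Set (ℕ × E)) →
      e ((n, x) : OnePoint (ℕ × E)) = ((p.1, x) : ℕ × E) := by
    intro n hns hnc
    obtain ⟨⟨k, z⟩, hk, hz⟩ := hnc
    have hk' : k = p.1 := hk
    have sim : PointedSimilar x z := by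
      have s1 : PointedSimilar x ((n, x) : ℕ × E) := psim_prodMk n x
      have s2 : PointedSimilar ((n, x) : ℕ × E) (((n, x) : ℕ × E) : OnePoint (ℕ × E)) :=
        psim_of_isOpenEmbedding isOpenEmbedding_coe _
      have s3 : PointedSimilar (((n, x) : ℕ × E) : OnePoint (ℕ × E))
          (e ((n, x) : OnePoint (ℕ × E))) := psim_of_ph e hns.1
      rw [← hz] at s3
      have s4 : PointedSimilar (((k, z) : ℕ × E) : OnePoint (ℕ × E)) ((k, z) : ℕ × E) :=
        psim_symm (psim_of_isOpenEmbedding isOpenEmbedding_coe _)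
      have s5 : PointedSimilar ((k, z) : ℕ × E) z := psim_symm (psim_prodMk k z)
      exact psim_trans (psim_trans (psim_trans (psim_trans s1 s2) s3) s4) s5
    have : z = x := hx z sim
    rw [← hz, this, hk']
  -- pick two distinct indices
  obtain ⟨N, hN⟩ := (hsrc.and hcopy).exists_forall_of_atTop
  have h1 := hN N le_rfl
  have h2 := hN (N + 1) (Nat.le_succ N)
  have e1 := key N h1.1 h1.2
  have e2 := key (N + 1) h2.1 h2.2
  have heq : ((N, x) : OnePoint (ℕ × E)) = (((N + 1, x) : ℕ × E) : OnePoint (ℕ × E)) :=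
    e.injOn h1.1.1 h2.1.1 (by rw [e1, e2])
  have hfst : N = N + 1 := congrArg Prod.fst (OnePoint.coe_injective heq)
  omega

/-- If `E` is Hausdorff, zero-dimensional and has a topologically distinguished point,
then the point at infinity of the one-point compactification of `E⋅ω = ℕ × E` is
topologically distinguished. -/
theorem infty_top_distinguished {E : Type*} [TopologicalSpace E] [T2Space E]
    (hbasis : ∃ B : Set (Set E), (∀ s ∈ B, IsClopen s) ∧
      TopologicalSpace.IsTopologicalBasis B)
    (x : E) (hx : ∀ y : E, PointedSimilar x y → y = x) :
    ∀ y : OnePoint (ℕ × E), PointedSimilar (∞ : OnePoint (ℕ × E)) y → y = ∞ := by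
  exact aux_infty_distinguished x hx
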